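/- Inversion of the discrete two-sided quaternion Fourier transform: let M be a positive integer and f : Fin M × Fin M → ℍ. Define F_D[f](w1,w2) := Σ_{x1=0}^{M−1} Σ_{x2=0}^{M−1} exp(−i·2π·w1·x1/M) · f(x1,x2) · exp(−j·2π·w2·x2/M). Then for all x1, x2 ∈ Fin M, Σ_{w1=0}^{M−1} Σ_{w2=0}^{M−1} exp(i·2π·w1·x1/M) · F_D[f](w1,w2) · exp(j·2π·w2·x2/M) = M² · f(x1, x2). -/

import Mathlib

/-!
Both exponentials are images of the complex exponential under the ℝ-algebra embeddings `ℂ → ℍ`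
sending `I` to `i` and to `j`. Hence `ζ = exp(2πi/M)` and `η = exp(2πj/M)` have order `M` in `ℍ`,
and every kernel in the two sums is a power of `ζ`, `η` or their inverses. Inversion then holds
for any two elements of order `M` in a division ring: the sums over `w₁` (on the left) and over
`w₂` (on the right) collapse by the orthogonality relation `∑_w ζ^{wx} ζ^{-wy} = M δ_{xy}`, a
geometric sum, although `ζ`, `η` and the values of `f` need not commute with each other.
-/

open MeasureTheory Real Filter
open scoped Quaternion ENNReal

/-- The quaternion imaginary unit `i`. -/
noncomputable def qi : ℍ[ℝ] := ⟨0, 1, 0, 0⟩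

/-- The quaternion imaginary unit `j`. -/
noncomputable def qj : ℍ[ℝ] := ⟨0, 0, 1, 0⟩

/-- `exp (i t) = cos t + i sin t` as a quaternion. -/
noncomputable def expI (t : ℝ) : ℍ[ℝ] := ⟨Real.cos t, Real.sin t, 0, 0⟩

/-- `exp (j t) = cos t + j sin t` as a quaternion. -/
noncomputable def expJ (t : ℝ) : ℍ[ℝ] := ⟨Real.cos t, 0, Real.sin t, 0⟩

/-- The two-sided quaternion Fourier transform of `f : ℝ² → ℍ`:
`F[f](w₁,w₂) = (1/(2π)) ∫ exp(-i w₁ x₁) f(x) exp(-j w₂ x₂) dx`. -/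
noncomputable def QFT (f : ℝ × ℝ → ℍ[ℝ]) (w₁ w₂ : ℝ) : ℍ[ℝ] :=
  (1 / (2 * π)) • ∫ x : ℝ × ℝ, expI (-(w₁ * x.1)) * f x * expJ (-(w₂ * x.2))

/-- The quaternion Hardy filter system function
`H₃(w₁,w₂,s₁,s₂) = e^{-|w₁|s₁} e^{-|w₂|s₂} (1+sgn w₁)(1+sgn w₂)`. -/
noncomputable def H3 (w₁ w₂ s₁ s₂ : ℝ) : ℝ :=
  Real.exp (-|w₁| * s₁) * Real.exp (-|w₂| * s₂) * (1 + Real.sign w₁) * (1 + Real.sign w₂)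

/-- The filtered signal `f_Q(x₁,x₂,s₁,s₂) =
(1/(2π)) ∫ exp(i w₁ x₁) H₃(w₁,w₂,s₁,s₂) F[f](w₁,w₂) exp(j w₂ x₂) dw`. -/
noncomputable def fQ (f : ℝ × ℝ → ℍ[ℝ]) (x₁ x₂ s₁ s₂ : ℝ) : ℍ[ℝ] :=
  (1 / (2 * π)) • ∫ w : ℝ × ℝ,
    expI (w.1 * x₁) * (H3 w.1 w.2 s₁ s₂ • QFT f w.1 w.2) * expJ (w.2 * x₂)

theorem geom_sum_eq_zero_of_pow_eq_one {A : Type*} [DivisionRing A] {u : A} {M : ℕ}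
    (hu : u ≠ 1) (huM : u ^ M = 1) : ∑ i ∈ Finset.range M, u ^ i = 0 := by
  rw [geom_sum_eq hu, huM, sub_self, zero_div]

section DFT

variable {A : Type*} [DivisionRing A] {M : ℕ}

theorem sum_pow_mul_inv_pow_of_orderOf_eq {ζ : A} (hζ : orderOf ζ = M) (x y : Fin M) :
    ∑ w : Fin M, ζ ^ (w * x : ℕ) * (ζ ^ (w * y : ℕ))⁻¹ = if x = y then (M : A) else 0 := by
  have hζM : ζ ^ M = 1 := hζ ▸ pow_orderOf_eq_one ζ
  have hζ0 : ζ ≠ 0 := by rintro rfl; simp [zero_pow x.pos.ne'] at hζM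
  set u := ζ ^ (x : ℕ) * (ζ ^ (y : ℕ))⁻¹ with hu_def
  have hcomm : Commute (ζ ^ (x : ℕ)) (ζ ^ (y : ℕ))⁻¹ := ((Commute.refl ζ).pow_pow _ _).inv_right₀
  have hterm (w : ℕ) : ζ ^ (w * x) * (ζ ^ (w * y))⁻¹ = u ^ w := by
    rw [hcomm.mul_pow, inv_pow, ← pow_mul, ← pow_mul, mul_comm w, mul_comm w]
  simp only [hterm]
  split_ifs with hxy
  · subst hxy
    simp [hu_def, mul_inv_cancel₀ (pow_ne_zero _ hζ0)]
  · have hu : u ≠ 1 := fun h ↦ hxy <| Fin.ext <|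
      pow_injOn_Iio_orderOf (by rw [Set.mem_Iio, hζ]; exact x.isLt)
        (by rw [Set.mem_Iio, hζ]; exact y.isLt) <| by
        rwa [hu_def, mul_inv_eq_one₀ (pow_ne_zero _ hζ0)] at h
    have huM : u ^ M = 1 := by
      rw [hcomm.mul_pow, inv_pow, ← pow_mul, ← pow_mul, mul_comm _ M, mul_comm _ M, pow_mul,
        pow_mul, hζM, one_pow, one_pow, inv_one, one_mul]
    rw [Fin.sum_univ_eq_sum_range (u ^ ·), geom_sum_eq_zero_of_pow_eq_one hu huM]

theorem sum_inv_pow_mul_pow_of_orderOf_eq {ζ : A} (hζ : orderOf ζ = M) (x y : Fin M) :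
    ∑ w : Fin M, (ζ ^ (w * y : ℕ))⁻¹ * ζ ^ (w * x : ℕ) = if x = y then (M : A) else 0 := by
  simp only [((Commute.refl ζ).pow_pow _ _).inv_left₀.eq, sum_pow_mul_inv_pow_of_orderOf_eq hζ]

def twoSidedDFT (ζ η : A) (f : Fin M → Fin M → A) (w₁ w₂ : Fin M) : A :=
  ∑ x₁ : Fin M, ∑ x₂ : Fin M, (ζ ^ (w₁ * x₁ : ℕ))⁻¹ * f x₁ x₂ * (η ^ (w₂ * x₂ : ℕ))⁻¹

theorem twoSidedDFT_inversion {ζ η : A} (hζ : orderOf ζ = M) (hη : orderOf η = M)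
    (f : Fin M → Fin M → A) (x₁ x₂ : Fin M) :
    ∑ w₁ : Fin M, ∑ w₂ : Fin M, ζ ^ (w₁ * x₁ : ℕ) * twoSidedDFT ζ η f w₁ w₂ * η ^ (w₂ * x₂ : ℕ)
      = M ^ 2 • f x₁ x₂ := by
  calc _ = ∑ y₁ : Fin M, ∑ y₂ : Fin M,
        (∑ w₁ : Fin M, ζ ^ (w₁ * x₁ : ℕ) * (ζ ^ (w₁ * y₁ : ℕ))⁻¹) * f y₁ y₂ *
          ∑ w₂ : Fin M, (η ^ (w₂ * y₂ : ℕ))⁻¹ * η ^ (w₂ * x₂ : ℕ) := by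
        simp only [twoSidedDFT, Finset.mul_sum, Finset.sum_mul, mul_assoc]
        rw [Finset.sum_comm_cycle]
        refine Finset.sum_congr rfl fun y₁ _ ↦ ?_
        rw [Finset.sum_comm_cycle]
        exact Finset.sum_congr rfl fun y₂ _ ↦ Finset.sum_comm
    _ = (M : A) * f x₁ x₂ * M := by
        simp [sum_pow_mul_inv_pow_of_orderOf_eq hζ, sum_inv_pow_mul_pow_of_orderOf_eq hη]
    _ = M ^ 2 • f x₁ x₂ := by
        rw [nsmul_eq_mul, Nat.cast_pow, sq, mul_assoc, ← (Nat.cast_commute M (f x₁ x₂)).eq,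
          mul_assoc]

end DFT

section ComplexEmbedding

open Complex

variable {A : Type*} [DivisionRing A] [Algebra ℝ A] (φ : ℂ →ₐ[ℝ] A)

theorem AlgHom.map_exp_natCast_mul_mul_I (n : ℕ) (t : ℝ) :
    φ (exp (↑(n * t) * I)) = φ (exp (t * I)) ^ n := by
  rw [ofReal_mul, ofReal_natCast, mul_assoc, Complex.exp_nat_mul, map_pow]

theorem AlgHom.map_exp_neg_mul_I (t : ℝ) : φ (exp (↑(-t) * I)) = (φ (exp (t * I)))⁻¹ := by
  rw [ofReal_neg, neg_mul, Complex.exp_neg, map_inv₀]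

theorem AlgHom.orderOf_map_exp_two_pi_div_mul_I {M : ℕ} (hM : M ≠ 0) :
    orderOf (φ (exp (↑(2 * π / M) * I))) = M := by
  have hexp : (↑(2 * π / M) * I : ℂ) = 2 * π * I / M := by push_cast; ring
  rw [hexp]
  exact (orderOf_injective (φ : ℂ →+* A).toMonoidHom φ.injective _).trans
    (isPrimitiveRoot_exp M hM).eq_orderOf.symm

end ComplexEmbedding

theorem qi_mul_qi : qi * qi = -1 := by
  ext <;> simp only [Quaternion.re_mul, Quaternion.imI_mul, Quaternion.imJ_mul, Quaternion.imK_mul]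
    <;> simp [qi]

theorem qj_mul_qj : qj * qj = -1 := by
  ext <;> simp only [Quaternion.re_mul, Quaternion.imI_mul, Quaternion.imJ_mul, Quaternion.imK_mul]
    <;> simp [qj]

theorem expI_eq_lift_exp (t : ℝ) :
    expI t = Complex.lift ⟨qi, qi_mul_qi⟩ (Complex.exp (t * Complex.I)) := by
  rw [Complex.lift_apply, Complex.liftAux_apply, Complex.exp_ofReal_mul_I_re,
    Complex.exp_ofReal_mul_I_im]
  ext <;> simp only [Quaternion.re_add, Quaternion.imI_add, Quaternion.imJ_add, Quaternion.imK_add,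
    Quaternion.re_smul, Quaternion.imI_smul, Quaternion.imJ_smul, Quaternion.imK_smul]
    <;> simp [expI, qi]

theorem expJ_eq_lift_exp (t : ℝ) :
    expJ t = Complex.lift ⟨qj, qj_mul_qj⟩ (Complex.exp (t * Complex.I)) := by
  rw [Complex.lift_apply, Complex.liftAux_apply, Complex.exp_ofReal_mul_I_re,
    Complex.exp_ofReal_mul_I_im]
  ext <;> simp only [Quaternion.re_add, Quaternion.imI_add, Quaternion.imJ_add, Quaternion.imK_add,
    Quaternion.re_smul, Quaternion.imI_smul, Quaternion.imJ_smul, Quaternion.imK_smul]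
    <;> simp [expJ, qj]

theorem expI_neg (t : ℝ) : expI (-t) = (expI t)⁻¹ := by
  simp only [expI_eq_lift_exp, AlgHom.map_exp_neg_mul_I]

theorem expJ_neg (t : ℝ) : expJ (-t) = (expJ t)⁻¹ := by
  simp only [expJ_eq_lift_exp, AlgHom.map_exp_neg_mul_I]

theorem expI_two_pi_mul_mul_div (w x M : ℕ) :
    expI (2 * π * w * x / M) = expI (2 * π / M) ^ (w * x) := by
  rw [show 2 * π * w * x / M = ((w * x : ℕ) : ℝ) * (2 * π / M) by push_cast; ring]
  simp only [expI_eq_lift_exp, AlgHom.map_exp_natCast_mul_mul_I]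

theorem expJ_two_pi_mul_mul_div (w x M : ℕ) :
    expJ (2 * π * w * x / M) = expJ (2 * π / M) ^ (w * x) := by
  rw [show 2 * π * w * x / M = ((w * x : ℕ) : ℝ) * (2 * π / M) by push_cast; ring]
  simp only [expJ_eq_lift_exp, AlgHom.map_exp_natCast_mul_mul_I]

theorem orderOf_expI_two_pi_div {M : ℕ} (hM : M ≠ 0) : orderOf (expI (2 * π / M)) = M := by
  rw [expI_eq_lift_exp]
  exact AlgHom.orderOf_map_exp_two_pi_div_mul_I _ hM

theorem orderOf_expJ_two_pi_div {M : ℕ} (hM : M ≠ 0) : orderOf (expJ (2 * π / M)) = M := by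
  rw [expJ_eq_lift_exp]
  exact AlgHom.orderOf_map_exp_two_pi_div_mul_I _ hM

theorem dqft_inversion_general (M : ℕ) (f : Fin M → Fin M → ℍ[ℝ])
    (F : Fin M → Fin M → ℍ[ℝ])
    (hF : ∀ w₁ w₂ : Fin M, F w₁ w₂ =
      ∑ x₁ : Fin M, ∑ x₂ : Fin M,
        expI (-(2 * π * (w₁ : ℕ) * (x₁ : ℕ) / M)) * f x₁ x₂ *
          expJ (-(2 * π * (w₂ : ℕ) * (x₂ : ℕ) / M)))
    (x₁ x₂ : Fin M) :
    ∑ w₁ : Fin M, ∑ w₂ : Fin M,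
        expI (2 * π * (w₁ : ℕ) * (x₁ : ℕ) / M) * F w₁ w₂ *
          expJ (2 * π * (w₂ : ℕ) * (x₂ : ℕ) / M)
      = ((M : ℝ) ^ 2) • f x₁ x₂ := by
  have hM : M ≠ 0 := x₁.pos.ne'
  have hF_eq : F = twoSidedDFT (expI (2 * π / M)) (expJ (2 * π / M)) f := by
    funext w₁ w₂
    simp only [hF, twoSidedDFT, expI_neg, expJ_neg, expI_two_pi_mul_mul_div,
      expJ_two_pi_mul_mul_div]
  simp only [hF_eq, expI_two_pi_mul_mul_div, expJ_two_pi_mul_mul_div]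
  rw [twoSidedDFT_inversion (orderOf_expI_two_pi_div hM) (orderOf_expJ_two_pi_div hM),
    ← Nat.cast_pow, Nat.cast_smul_eq_nsmul]

/-- Inversion of the discrete two-sided quaternion Fourier transform:
for `M > 0`, `f : Fin M × Fin M → ℍ` (curried) and
`F_D[f](w₁,w₂) = Σ_{x₁,x₂} exp(−i 2π w₁ x₁/M) f(x₁,x₂) exp(−j 2π w₂ x₂/M)`, one has
`Σ_{w₁,w₂} exp(i 2π w₁ x₁/M) F_D[f](w₁,w₂) exp(j 2π w₂ x₂/M) = M² f(x₁,x₂)`. -/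
theorem dqft_inversion (M : ℕ) (hM : 0 < M) (f : Fin M → Fin M → ℍ[ℝ])
    (F : Fin M → Fin M → ℍ[ℝ])
    (hF : ∀ w₁ w₂ : Fin M, F w₁ w₂ =
      ∑ x₁ : Fin M, ∑ x₂ : Fin M,
        expI (-(2 * π * (w₁ : ℕ) * (x₁ : ℕ) / M)) * f x₁ x₂ *
          expJ (-(2 * π * (w₂ : ℕ) * (x₂ : ℕ) / M)))
    (x₁ x₂ : Fin M) :
    ∑ w₁ : Fin M, ∑ w₂ : Fin M,
        expI (2 * π * (w₁ : ℕ) * (x₁ : ℕ) / M) * F w₁ w₂ *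
          expJ (2 * π * (w₂ : ℕ) * (x₂ : ℕ) / M)
      = ((M : ℝ) ^ 2) • f x₁ x₂ :=
  dqft_inversion_general M f F hF x₁ x₂
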